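/- Let H be a separable complex Hilbert space, let a be a bounded, hermitian, elliptic sesquilinear form on H, let C : H → H be a compact linear operator, and let b(u,v) := a(u,v) + ⟨C u, v⟩ be well-posed. Let (X_ℓ)_{ℓ∈ℕ} be a nested sequence of finite-dimensional subspaces (X_ℓ ⊆ X_{ℓ+1}) such that dist(ψ, X_ℓ) → 0 as ℓ → ∞ for every ψ ∈ H. Let f be a bounded conjugate-linear functional on H and let φ ∈ H be the unique solution of b(φ,ψ) = f(ψ) for all ψ ∈ H. Then there exists ℓ• ∈ ℕ such that for every ℓ ≥ ℓ• the Galerkin solution Φ_ℓ ∈ X_ℓ (b(Φ_ℓ,Ψ) = f(Ψ) for all Ψ ∈ X_ℓ) exists and is unique, and ‖φ − Φ_ℓ‖ → 0 as ℓ → ∞. -/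

import Mathlib

/-!
Writing `a u v = ⟪v, A u⟫` turns `b` into the operator `A + C`, and the Galerkin equations on a
closed subspace `X` into `P_X ((A + C) Φ) = P_X ((A + C) φ)`, `P_X` the orthogonal projection.
By Lax–Milgram `A` is invertible, so `A + C = A (1 + T)` with `T = A⁻¹ C` compact, and `1 + T` is
injective, hence bounded below by the Fredholm alternative. Since `P_ℓ → 1` strongly and `T` is
compact, `P_ℓ T → T` in operator norm; with the coercivity of `A` on `X ℓ` this yields a uniform
discrete stability bound `‖u‖ ≤ Cs ‖P_ℓ ((A + C) u)‖` on `X ℓ` for large `ℓ`. Stability gives unique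
solvability on the finite-dimensional `X ℓ` and the quasi-optimal estimate
`‖φ - Φ_ℓ‖ ≤ (1 + Cs ‖A + C‖) dist(φ, X ℓ)`.
-/

open scoped InnerProductSpace ComplexConjugate
open Filter Topology NNReal

section CompactOperator

variable {𝕜 : Type*} [RCLike 𝕜] {E F G : Type*} [NormedAddCommGroup E] [NormedSpace 𝕜 E]
  [NormedAddCommGroup F] [NormedSpace 𝕜 F] [NormedAddCommGroup G] [NormedSpace 𝕜 G]

theorem IsCompactOperator.tendsto_norm_comp_sub_comp {ι : Type*} {l : Filter ι}
    {T : E →L[𝕜] F} (hT : IsCompactOperator T) {P : ι → F →L[𝕜] G} {Q : F →L[𝕜] G} (K : ℝ≥0)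
    (hP : ∀ i, LipschitzWith K (P i)) (hPQ : ∀ x, Tendsto (fun i => P i x) l (𝓝 (Q x))) :
    Tendsto (fun i => ‖Q ∘L T - P i ∘L T‖) l (𝓝 0) := by
  set S := closure (T '' Metric.closedBall 0 1)
  have : CompactSpace S := isCompact_iff_compactSpace.mp (hT.isCompact_closure_image_closedBall 1)
  have hunif : TendstoUniformly (fun i (y : S) => P i y) (fun y => Q y) l := by
    refine UniformFun.tendsto_iff_tendstoUniformly.mp
      ((Equicontinuous.tendsto_uniformFun_iff_pi ?_ l _).mpr (tendsto_pi_nhds.mpr fun y => hPQ y))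
    exact (LipschitzWith.uniformEquicontinuous _ _ fun i => (hP i).comp
        (LipschitzWith.subtype_val S)).equicontinuous
  rw [Metric.tendsto_nhds]
  intro ε hε
  filter_upwards [Metric.tendstoUniformly_iff.mp hunif (ε / 2) (half_pos hε)] with i hi
  rw [Real.dist_eq, sub_zero, abs_norm]
  refine lt_of_le_of_lt (ContinuousLinearMap.opNorm_le_of_unit_norm (half_pos hε).le fun x hx => ?_)
    (half_lt_self hε)
  have hTx : T x ∈ S := subset_closure ⟨x, by simp [hx], rfl⟩
  simpa [dist_eq_norm] using (hi ⟨T x, hTx⟩).le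

end CompactOperator

section InnerProductSpace

variable {𝕜 E : Type*} [RCLike 𝕜] [NormedAddCommGroup E] [InnerProductSpace 𝕜 E]

theorem exists_inner_apply_eq_of_sesquilinear [CompleteSpace E] (a : E → E → 𝕜)
    (ha_add₁ : ∀ u v w : E, a (u + v) w = a u w + a v w)
    (ha_smul₁ : ∀ (c : 𝕜) (u v : E), a (c • u) v = c * a u v)
    (ha_add₂ : ∀ u v w : E, a u (v + w) = a u v + a u w)
    (ha_smul₂ : ∀ (c : 𝕜) (u v : E), a u (c • v) = conj c * a u v)
    (M : ℝ) (ha_bdd : ∀ u v : E, ‖a u v‖ ≤ M * ‖u‖ * ‖v‖) :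
    ∃ A : E →L[𝕜] E, ∀ u v, ⟪v, A u⟫_𝕜 = a u v := by
  let B : E →L⋆[𝕜] E →L[𝕜] 𝕜 := LinearMap.mkContinuous₂
    (LinearMap.mk₂'ₛₗ (starRingEnd 𝕜) (RingHom.id 𝕜) (fun u v => conj (a u v))
      (fun u u' v => by simp [ha_add₁]) (fun c u v => by simp [ha_smul₁])
      (fun u v v' => by simp [ha_add₂]) (fun c u v => by simp [ha_smul₂]))
    M (fun u v => by simpa using ha_bdd u v)
  refine ⟨InnerProductSpace.continuousLinearMapOfBilin B, fun u v => ?_⟩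
  rw [← inner_conj_symm, InnerProductSpace.continuousLinearMapOfBilin_apply]
  simp [B]

section Coercive

variable {α : ℝ} {A : E →L[𝕜] E}

theorem norm_le_inv_mul_norm_starProjection_of_coercive (hα : 0 < α)
    (hA : ∀ u, α * ‖u‖ ^ 2 ≤ RCLike.re ⟪u, A u⟫_𝕜) (K : Submodule 𝕜 E)
    [K.HasOrthogonalProjection] {u : E} (hu : u ∈ K) :
    ‖u‖ ≤ α⁻¹ * ‖K.starProjection (A u)‖ := by
  have hsq : α * ‖u‖ ^ 2 ≤ ‖u‖ * ‖K.starProjection (A u)‖ :=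
    calc α * ‖u‖ ^ 2 ≤ RCLike.re ⟪u, A u⟫_𝕜 := hA u
      _ = RCLike.re ⟪u, K.starProjection (A u)⟫_𝕜 := by
        rw [← K.inner_starProjection_left_eq_right, K.starProjection_eq_self_iff.mpr hu]
      _ ≤ ‖u‖ * ‖K.starProjection (A u)‖ := re_inner_le_norm _ _
  rw [le_inv_mul_iff₀ hα]
  rcases (norm_nonneg u).eq_or_lt with hu0 | hu0
  · rw [← hu0]; simp
  · nlinarith

variable [CompleteSpace E]

theorem bijective_of_coercive (hα : 0 < α) (hA : ∀ u, α * ‖u‖ ^ 2 ≤ RCLike.re ⟪u, A u⟫_𝕜) :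
    Function.Bijective A := by
  have hbound (u : E) : ‖u‖ ≤ α⁻¹ * ‖A u‖ := by
    simpa [Submodule.starProjection_top] using
      norm_le_inv_mul_norm_starProjection_of_coercive hα hA ⊤ (Submodule.mem_top (x := u))
  have hanti : AntilipschitzWith ⟨α⁻¹, by positivity⟩ A := A.antilipschitz_of_bound hbound
  refine ⟨hanti.injective, LinearMap.range_eq_top.mp ?_⟩
  have hclosed : IsClosed (LinearMap.range (A : E →ₗ[𝕜] E) : Set E) := by
    simpa [LinearMap.coe_range] using hanti.isClosed_range A.uniformContinuous
  rw [← hclosed.submodule_topologicalClosure_eq, Submodule.topologicalClosure_eq_top_iff,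
    Submodule.eq_bot_iff]
  intro v hv
  have hAv : ⟪A v, v⟫_𝕜 = 0 := hv _ (LinearMap.mem_range_self _ v)
  have : α * ‖v‖ ^ 2 ≤ 0 := by simpa [← inner_conj_symm v, hAv] using hA v
  have : ‖v‖ ^ 2 ≤ 0 := by nlinarith
  simpa using this

end Coercive

theorem Submodule.norm_sub_starProjection_eq_infDist (K : Submodule 𝕜 E)
    [K.HasOrthogonalProjection] (u : E) :
    ‖u - K.starProjection u‖ = Metric.infDist u K := by
  simp [Submodule.starProjection_minimal, Metric.infDist_eq_iInf, dist_eq_norm]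

theorem Submodule.starProjection_eq_starProjection_iff (K : Submodule 𝕜 E)
    [K.HasOrthogonalProjection] {x y : E} :
    K.starProjection x = K.starProjection y ↔ ∀ v ∈ K, ⟪v, x⟫_𝕜 = ⟪v, y⟫_𝕜 := by
  rw [← sub_eq_zero, ← map_sub, Submodule.starProjection_apply_eq_zero_iff]
  simp only [Submodule.mem_orthogonal, inner_sub_right, sub_eq_zero]

theorem tendsto_starProjection_of_tendsto_infDist {ι : Type*} {l : Filter ι}
    {X : ι → Submodule 𝕜 E} [∀ i, (X i).HasOrthogonalProjection]
    (hX : ∀ u : E, Tendsto (fun i => Metric.infDist u (X i : Set E)) l (𝓝 0)) (u : E) :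
    Tendsto (fun i => (X i).starProjection u) l (𝓝 u) := by
  rw [tendsto_iff_norm_sub_tendsto_zero]
  simpa only [norm_sub_rev, Submodule.norm_sub_starProjection_eq_infDist] using hX u

section Galerkin

variable (K : Submodule 𝕜 E) [K.HasOrthogonalProjection] (B : E →L[𝕜] E) {Cs : ℝ}

theorem existsUnique_starProjection_apply_eq [FiniteDimensional 𝕜 K]
    (hB : ∀ u ∈ K, ‖u‖ ≤ Cs * ‖K.starProjection (B u)‖) (g : E) :
    ∃! Φ, Φ ∈ K ∧ K.starProjection (B Φ) = K.starProjection g := by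
  have hinj (u : E) (hu : u ∈ K) (h0 : K.starProjection (B u) = 0) : u = 0 := by
    simpa [h0] using hB u hu
  let S : K →ₗ[𝕜] K := (K.orthogonalProjectionOnto ∘L B ∘L K.subtypeL : K →L[𝕜] K)
  have hS : Function.Surjective S := LinearMap.injective_iff_surjective.mp fun w w' h => by
    refine Subtype.ext (sub_eq_zero.mp (hinj _ (sub_mem w.2 w'.2) ?_))
    have h' : K.starProjection (B w) = K.starProjection (B w') := congrArg Subtype.val h
    rw [map_sub, map_sub, h', sub_self]
  obtain ⟨w, hw⟩ := hS (K.orthogonalProjectionOnto g)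
  have hw' : K.starProjection (B w) = K.starProjection g := congrArg Subtype.val hw
  refine ⟨w, ⟨w.2, hw'⟩, fun Φ ⟨hΦ, hΦg⟩ => sub_eq_zero.mp (hinj _ (sub_mem hΦ w.2) ?_)⟩
  rw [map_sub, map_sub, hΦg, hw', sub_self]

theorem norm_sub_le_of_starProjection_apply_eq (hCs : 0 ≤ Cs)
    (hB : ∀ u ∈ K, ‖u‖ ≤ Cs * ‖K.starProjection (B u)‖) {φ Φ : E} (hΦ : Φ ∈ K)
    (hΦφ : K.starProjection (B Φ) = K.starProjection (B φ)) :
    ‖φ - Φ‖ ≤ (1 + Cs * ‖B‖) * ‖φ - K.starProjection φ‖ := by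
  have hdisc : ‖K.starProjection φ - Φ‖ ≤ Cs * ‖B‖ * ‖φ - K.starProjection φ‖ :=
    calc ‖K.starProjection φ - Φ‖
        ≤ Cs * ‖K.starProjection (B (K.starProjection φ - Φ))‖ :=
          hB _ (sub_mem (K.starProjection_apply_mem φ) hΦ)
      _ = Cs * ‖K.starProjection (B (K.starProjection φ - φ))‖ := by simp [hΦφ]
      _ ≤ Cs * (‖B‖ * ‖φ - K.starProjection φ‖) := by
          gcongr
          exact (K.norm_starProjection_apply_le _).trans
            (by simpa [norm_sub_rev] using B.le_opNorm (K.starProjection φ - φ))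
      _ = Cs * ‖B‖ * ‖φ - K.starProjection φ‖ := by ring
  calc ‖φ - Φ‖ ≤ ‖φ - K.starProjection φ‖ + ‖K.starProjection φ - Φ‖ :=
        norm_sub_le_norm_sub_add_norm_sub _ _ _
    _ ≤ (1 + Cs * ‖B‖) * ‖φ - K.starProjection φ‖ := by linarith

end Galerkin

section InfSup

variable {α : ℝ} {A : E →L[𝕜] E}

theorem norm_le_of_coercive_of_le_mul_norm_add (hα : 0 < α)
    (hA : ∀ u, α * ‖u‖ ^ 2 ≤ RCLike.re ⟪u, A u⟫_𝕜) (K : Submodule 𝕜 E)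
    [K.HasOrthogonalProjection] {κ : ℝ} (hκ : 0 ≤ κ) {u w : E} (hu : u ∈ K)
    (huw : ‖u‖ ≤ κ * ‖u + w‖) :
    ‖u‖ ≤ κ * α⁻¹ * ‖K.starProjection (A (u + w))‖
      + κ * (α⁻¹ * ‖A‖ + 1) * ‖w - K.starProjection w‖ := by
  set P := K.starProjection
  have hdisc : ‖u + P w‖ ≤ α⁻¹ * (‖P (A (u + w))‖ + ‖A‖ * ‖w - P w‖) :=
    calc ‖u + P w‖ ≤ α⁻¹ * ‖P (A (u + P w))‖ :=
          norm_le_inv_mul_norm_starProjection_of_coercive hα hA K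
            (add_mem hu (K.starProjection_apply_mem _))
      _ ≤ α⁻¹ * (‖P (A (u + w))‖ + ‖A‖ * ‖w - P w‖) := by
          gcongr
          have hsplit : P (A (u + P w)) = P (A (u + w)) - P (A (w - P w)) := by
            rw [← map_sub, ← map_sub]; congr 2; abel
          rw [hsplit]
          exact (norm_sub_le _ _).trans
            (add_le_add le_rfl ((K.norm_starProjection_apply_le _).trans (A.le_opNorm _)))
  calc ‖u‖ ≤ κ * ‖(u + P w) + (w - P w)‖ := by rw [add_add_sub_cancel]; exact huw
    _ ≤ κ * (α⁻¹ * (‖P (A (u + w))‖ + ‖A‖ * ‖w - P w‖) + ‖w - P w‖) := by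
        gcongr
        exact (norm_add_le _ _).trans (add_le_add hdisc le_rfl)
    _ = κ * α⁻¹ * ‖P (A (u + w))‖ + κ * (α⁻¹ * ‖A‖ + 1) * ‖w - P w‖ := by ring

theorem eventually_norm_le_mul_norm_starProjection_of_coercive_of_compact (hα : 0 < α)
    (hA : ∀ u, α * ‖u‖ ^ 2 ≤ RCLike.re ⟪u, A u⟫_𝕜) {T : E →L[𝕜] E} (hT : IsCompactOperator T)
    (hinj : ∀ u, u + T u = 0 → u = 0) {ι : Type*} {l : Filter ι} {X : ι → Submodule 𝕜 E}
    [∀ i, (X i).HasOrthogonalProjection]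
    (hX : ∀ u, Tendsto (fun i => (X i).starProjection u) l (𝓝 u)) :
    ∃ Cs ≥ 0, ∀ᶠ i in l, ∀ u ∈ X i, ‖u‖ ≤ Cs * ‖(X i).starProjection (A (u + T u))‖ := by
  obtain ⟨κ, hκ⟩ := hT.antilipschitz_of_not_hasEigenvalue (μ := -1) (by norm_num) fun h => by
    obtain ⟨v, hv, hv0⟩ := h.exists_hasEigenvector
    exact hv0 (hinj v (by simpa [Module.End.mem_eigenspace_iff, eq_neg_iff_add_eq_zero,
      add_comm] using hv))
  set c := κ * (α⁻¹ * ‖A‖ + 1)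
  have hsmall : ∀ᶠ i in l, c * ‖ContinuousLinearMap.id 𝕜 E ∘L T - (X i).starProjection ∘L T‖
      ≤ 1 / 2 := by
    have h := (hT.tendsto_norm_comp_sub_comp (Q := ContinuousLinearMap.id 𝕜 E) 1
      (fun i => (X i).lipschitzWith_starProjection) hX).const_mul c
    rw [mul_zero] at h
    exact h.eventually (eventually_le_nhds (b := 1 / 2) (by norm_num))
  refine ⟨κ * α⁻¹ * 2, by positivity, ?_⟩
  filter_upwards [hsmall] with i hi u hu
  have hTu : c * ‖T u - (X i).starProjection (T u)‖ ≤ ‖u‖ / 2 :=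
    calc c * ‖T u - (X i).starProjection (T u)‖
        ≤ c * (‖ContinuousLinearMap.id 𝕜 E ∘L T - (X i).starProjection ∘L T‖ * ‖u‖) := by
          gcongr
          simpa using (ContinuousLinearMap.id 𝕜 E ∘L T - (X i).starProjection ∘L T).le_opNorm u
      _ ≤ 1 / 2 * ‖u‖ := by rw [← mul_assoc]; gcongr
      _ = ‖u‖ / 2 := by ring
  have := norm_le_of_coercive_of_le_mul_norm_add hα hA (X i) κ.coe_nonneg hu
    (by simpa [add_comm] using hκ.le_mul_norm (by simp) u)
  linarith

end InfSup

theorem eventually_norm_le_mul_norm_starProjection_of_coercive_add_compact [CompleteSpace E]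
    {α : ℝ} {A : E →L[𝕜] E} (hα : 0 < α) (hA : ∀ u, α * ‖u‖ ^ 2 ≤ RCLike.re ⟪u, A u⟫_𝕜)
    {C : E →L[𝕜] E} (hC : IsCompactOperator C) (hinj : ∀ u, (A + C) u = 0 → u = 0)
    {ι : Type*} {l : Filter ι} {X : ι → Submodule 𝕜 E} [∀ i, (X i).HasOrthogonalProjection]
    (hX : ∀ u, Tendsto (fun i => (X i).starProjection u) l (𝓝 u)) :
    ∃ Cs ≥ 0, ∀ᶠ i in l, ∀ u ∈ X i, ‖u‖ ≤ Cs * ‖(X i).starProjection ((A + C) u)‖ := by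
  have hbij := bijective_of_coercive hα hA
  let e := ContinuousLinearEquiv.ofBijective A (LinearMap.ker_eq_bot.mpr hbij.1)
    (LinearMap.range_eq_top.mpr hbij.2)
  let T := (e.symm : E →L[𝕜] E) ∘L C
  have hAT (u : E) : A (u + T u) = (A + C) u := by
    simp [T, map_add, show A (e.symm (C u)) = C u from e.apply_symm_apply (C u)]
  simp_rw [← hAT]
  exact eventually_norm_le_mul_norm_starProjection_of_coercive_of_compact hα hA
    (hC.clm_comp (e.symm : E →L[𝕜] E)) (fun u hu => hinj u (by rw [← hAT, hu, map_zero])) hX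

end InnerProductSpace

theorem statement3_general
    {H : Type*} [NormedAddCommGroup H] [InnerProductSpace ℂ H] [CompleteSpace H]
    (a : H → H → ℂ)
    (ha_add₁ : ∀ u v w : H, a (u + v) w = a u w + a v w)
    (ha_smul₁ : ∀ (c : ℂ) (u v : H), a (c • u) v = c * a u v)
    (ha_add₂ : ∀ u v w : H, a u (v + w) = a u v + a u w)
    (ha_smul₂ : ∀ (c : ℂ) (u v : H), a u (c • v) = conj c * a u v)
    (M : ℝ) (ha_bdd : ∀ u v : H, ‖a u v‖ ≤ M * ‖u‖ * ‖v‖)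
    (α : ℝ) (hα : 0 < α) (ha_ell : ∀ u : H, α * ‖u‖ ^ 2 ≤ (a u u).re)
    (C : H →L[ℂ] H) (hC : IsCompactOperator C)
    (b : H → H → ℂ) (hb : ∀ u v : H, b u v = a u v + ⟪v, C u⟫_ℂ)
    (hwp : ∀ φ : H, (∀ ψ : H, b φ ψ = 0) → φ = 0)
    (X : ℕ → Submodule ℂ H) (hXfin : ∀ ℓ, FiniteDimensional ℂ (X ℓ))
    (hdense : ∀ ψ : H,
      Filter.Tendsto (fun ℓ => Metric.infDist ψ (X ℓ : Set H)) Filter.atTop (nhds 0))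
    (f : H → ℂ)
    (φ : H) (hφ : ∀ ψ : H, b φ ψ = f ψ) :
    ∃ ℓs : ℕ,
      (∀ ℓ : ℕ, ℓs ≤ ℓ → ∃! Φ : H, Φ ∈ X ℓ ∧ ∀ Ψ ∈ X ℓ, b Φ Ψ = f Ψ) ∧
      (∀ Φ : ℕ → H,
        (∀ ℓ : ℕ, ℓs ≤ ℓ → Φ ℓ ∈ X ℓ ∧ ∀ Ψ ∈ X ℓ, b (Φ ℓ) Ψ = f Ψ) →
        Filter.Tendsto (fun ℓ => ‖φ - Φ ℓ‖) Filter.atTop (nhds 0)) := by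
  obtain ⟨A, hA⟩ := exists_inner_apply_eq_of_sesquilinear a ha_add₁ ha_smul₁ ha_add₂ ha_smul₂ M
    ha_bdd
  have hbB (u v : H) : b u v = ⟪v, (A + C) u⟫_ℂ := by
    rw [hb, ← hA, ← inner_add_right]
    rfl
  have hgalerkin (ℓ : ℕ) (Φ : H) : (∀ Ψ ∈ X ℓ, b Φ Ψ = f Ψ) ↔
      (X ℓ).starProjection ((A + C) Φ) = (X ℓ).starProjection ((A + C) φ) := by
    simp only [← hφ, hbB, Submodule.starProjection_eq_starProjection_iff]
  obtain ⟨Cs, hCs, hstable⟩ := eventually_norm_le_mul_norm_starProjection_of_coercive_add_compact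
    hα (fun u => (hA u u).symm ▸ ha_ell u) hC
    (fun u hu => hwp u fun ψ => by rw [hbB, hu, inner_zero_right])
    (tendsto_starProjection_of_tendsto_infDist hdense)
  obtain ⟨ℓs, hℓs⟩ := eventually_atTop.mp hstable
  refine ⟨ℓs, fun ℓ hℓ => ?_, fun Φ hΦ => ?_⟩
  · simpa only [hgalerkin] using existsUnique_starProjection_apply_eq _ _ (hℓs ℓ hℓ) _
  · refine squeeze_zero' (Eventually.of_forall fun ℓ => norm_nonneg _)
      (eventually_atTop.mpr ⟨ℓs, fun ℓ hℓ => norm_sub_le_of_starProjection_apply_eq _ _ hCs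
        (hℓs ℓ hℓ) (hΦ ℓ hℓ).1 ((hgalerkin ℓ _).mp (hΦ ℓ hℓ).2)⟩) ?_
    simpa only [Submodule.norm_sub_starProjection_eq_infDist, mul_zero] using
      (hdense φ).const_mul (1 + Cs * ‖A + C‖)

/-- Convergence of Galerkin approximations for the compactly
perturbed elliptic form `b(u,v) = a(u,v) + ⟨C u, v⟩` on a separable complex
Hilbert space: for a nested, asymptotically dense sequence of finite-dimensional
subspaces `X ℓ`, there is `ℓ•` such that for all `ℓ ≥ ℓ•` the Galerkin solution
`Φ_ℓ ∈ X ℓ` exists and is unique, and `‖φ − Φ_ℓ‖ → 0`. -/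
theorem statement3
    {H : Type*} [NormedAddCommGroup H] [InnerProductSpace ℂ H] [CompleteSpace H]
    [TopologicalSpace.SeparableSpace H]
    (a : H → H → ℂ)
    (ha_add₁ : ∀ u v w : H, a (u + v) w = a u w + a v w)
    (ha_smul₁ : ∀ (c : ℂ) (u v : H), a (c • u) v = c * a u v)
    (ha_add₂ : ∀ u v w : H, a u (v + w) = a u v + a u w)
    (ha_smul₂ : ∀ (c : ℂ) (u v : H), a u (c • v) = conj c * a u v)
    (M : ℝ) (hM : 0 < M) (ha_bdd : ∀ u v : H, ‖a u v‖ ≤ M * ‖u‖ * ‖v‖)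
    (ha_herm : ∀ u v : H, a u v = conj (a v u))
    (α : ℝ) (hα : 0 < α) (ha_ell : ∀ u : H, α * ‖u‖ ^ 2 ≤ (a u u).re)
    (C : H →L[ℂ] H) (hC : IsCompactOperator C)
    (b : H → H → ℂ) (hb : ∀ u v : H, b u v = a u v + ⟪v, C u⟫_ℂ)
    (hwp : ∀ φ : H, (∀ ψ : H, b φ ψ = 0) → φ = 0)
    (X : ℕ → Submodule ℂ H) (hXfin : ∀ ℓ, FiniteDimensional ℂ (X ℓ))
    (hXnest : ∀ ℓ, X ℓ ≤ X (ℓ + 1))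
    (hdense : ∀ ψ : H,
      Filter.Tendsto (fun ℓ => Metric.infDist ψ (X ℓ : Set H)) Filter.atTop (nhds 0))
    (f : H → ℂ)
    (hf_add : ∀ x y : H, f (x + y) = f x + f y)
    (hf_smul : ∀ (c : ℂ) (x : H), f (c • x) = conj c * f x)
    (hf_bdd : ∃ Cf : ℝ, ∀ x : H, ‖f x‖ ≤ Cf * ‖x‖)
    (φ : H) (hφ : ∀ ψ : H, b φ ψ = f ψ) :
    ∃ ℓs : ℕ,
      (∀ ℓ : ℕ, ℓs ≤ ℓ → ∃! Φ : H, Φ ∈ X ℓ ∧ ∀ Ψ ∈ X ℓ, b Φ Ψ = f Ψ) ∧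
      (∀ Φ : ℕ → H,
        (∀ ℓ : ℕ, ℓs ≤ ℓ → Φ ℓ ∈ X ℓ ∧ ∀ Ψ ∈ X ℓ, b (Φ ℓ) Ψ = f Ψ) →
        Filter.Tendsto (fun ℓ => ‖φ - Φ ℓ‖) Filter.atTop (nhds 0)) :=
  statement3_general a ha_add₁ ha_smul₁ ha_add₂ ha_smul₂ M ha_bdd α hα ha_ell C hC b hb hwp X hXfin
    hdense f φ hφ
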